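/- arXiv:math/0702738 — 2 statements merged into one kernel-verified Lean document; each statement's English description precedes it below -/
import Mathlib

section
/- Let J be a symmetric 3×3 real matrix and define the nonstandard moment of inertia matrix J_d = (1/2)·tr(J)·I₃ − J. Then for every Ω ∈ ℝ³, S(Ω)·J_d + J_d·S(Ω) = S(JΩ), where S denotes the hat map. -/
open Matrix

/-- The hat map `S : ℝ³ → M₃(ℝ)`: the unique skew-symmetric matrix with
`S(x) y = x × y` for all `y`. -/
def hat (x : Fin 3 → ℝ) : Matrix (Fin 3) (Fin 3) ℝ :=
  !![0, -x 2, x 1; x 2, 0, -x 0; -x 1, x 0, 0]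

/-- The linearization at `A = 1` of the identity `Aᵀ S(x) A = S(adj A x)`. -/
theorem transpose_mul_hat_add_hat_mul (A : Matrix (Fin 3) (Fin 3) ℝ) (x : Fin 3 → ℝ) :
    Aᵀ * hat x + hat x * A = hat ((A.trace • 1 - A) *ᵥ x) := by
  ext i j
  fin_cases i <;> fin_cases j <;>
    simp [hat, mul_apply, mulVec, vecMul, dotProduct, trace, one_apply, Fin.sum_univ_three] <;> ring

theorem trace_half_trace_smul_one_sub (J : Matrix (Fin 3) (Fin 3) ℝ) :
    ((1 / 2 * J.trace) • (1 : Matrix (Fin 3) (Fin 3) ℝ) - J).trace = 1 / 2 * J.trace := by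
  rw [trace_sub, trace_smul, trace_one, Fintype.card_fin, smul_eq_mul]
  ring

/-- For symmetric `J` and `Jd = (1/2) tr(J) I₃ - J`, one has
`S(Ω) Jd + Jd S(Ω) = S(J Ω)` for every `Ω ∈ ℝ³`. -/
theorem hat_mul_Jd_add_Jd_mul_hat
    (J : Matrix (Fin 3) (Fin 3) ℝ) (hJ : J.IsSymm)
    (Jd : Matrix (Fin 3) (Fin 3) ℝ)
    (hJd : Jd = ((1 : ℝ) / 2 * J.trace) • (1 : Matrix (Fin 3) (Fin 3) ℝ) - J)
    (Ω : Fin 3 → ℝ) :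
    hat Ω * Jd + Jd * hat Ω = hat (J.mulVec Ω) := by
  have hJd_symm : Jdᵀ = Jd := by
    rw [hJd, transpose_sub, transpose_smul, transpose_one, hJ.eq]
  have hJd_dual : Jd.trace • 1 - Jd = J := by
    rw [hJd, trace_half_trace_smul_one_sub]
    abel
  calc hat Ω * Jd + Jd * hat Ω = Jdᵀ * hat Ω + hat Ω * Jd := by rw [add_comm, hJd_symm]
    _ = hat (J *ᵥ Ω) := by rw [transpose_mul_hat_add_hat_mul, hJd_dual]
end

section
/- Let R and V be 3×3 real matrices and let r_i ∈ ℝ³ and v_i ∈ ℝ³ (i = 1,2,3) denote the i-th rows of R and V respectively. Then S(r_1 × v_1 + r_2 × v_2 + r_3 × v_3) = Vᵀ R − Rᵀ V, where S is the hat map. In particular, the moment due to a potential U, defined by M = r_1 × u_{r_1} + r_2 × u_{r_2} + r_3 × u_{r_3} with u_{r_i} the i-th row of ∂U/∂R, satisfies S(M) = (∂U/∂R)ᵀ R − Rᵀ (∂U/∂R). -/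
open Matrix

theorem hat_add (x y : Fin 3 → ℝ) : hat (x + y) = hat x + hat y := by
  ext i j
  fin_cases i <;> fin_cases j <;> simp [hat, add_comm]

theorem hat_sum {ι : Type*} (s : Finset ι) (f : ι → Fin 3 → ℝ) :
    hat (∑ i ∈ s, f i) = ∑ i ∈ s, hat (f i) :=
  map_sum (AddMonoidHom.mk' hat hat_add) f s

theorem hat_cross (a b : Fin 3 → ℝ) : hat (a ⨯₃ b) = vecMulVec b a - vecMulVec a b := by
  ext i j
  fin_cases i <;> fin_cases j <;> simp [hat, cross_apply, vecMulVec_apply] <;> ring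

theorem Matrix.transpose_mul_eq_sum_vecMulVec {m n p α : Type*} [Fintype m]
    [NonUnitalNonAssocSemiring α] (A : Matrix m n α) (B : Matrix m p α) :
    Aᵀ * B = ∑ i, vecMulVec (A i) (B i) := by
  ext j k
  simp [mul_apply, vecMulVec_apply, Matrix.sum_apply]

/-- For 3×3 real matrices `R` and `V` with rows `r_i`, `v_i`,
one has `S(r₁ × v₁ + r₂ × v₂ + r₃ × v₃) = Vᵀ R − Rᵀ V`. In particular the
moment `M = ∑ r_i × u_{r_i}` due to a potential satisfies
`S(M) = (∂U/∂R)ᵀ R − Rᵀ (∂U/∂R)`. -/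
theorem hat_sum_rows_cross_eq
    (R V : Matrix (Fin 3) (Fin 3) ℝ) :
    hat (∑ i, crossProduct (fun j => R i j) (fun j => V i j)) = Vᵀ * R - Rᵀ * V := by
  simp only [hat_sum, hat_cross, Finset.sum_sub_distrib, transpose_mul_eq_sum_vecMulVec]
end
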